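/- Let A be a nonempty finite set, κ > 0, and for r : A → ℝ define the Boltzmann–Gibbs distribution β_r(a) = exp(r(a)/κ)/∑_{a'∈A} exp(r(a')/κ). Then each component of the Boltzmann–Gibbs map is Lipschitz with respect to the supremum norm with constant 1/κ: for all r, s : A → ℝ and all a ∈ A, |β_r(a) − β_s(a)| ≤ (1/κ)·max_{b∈A} |r(b) − s(b)|. -/
import Mathlib


open Finset

lemma aux_sinh_le (x : ℝ) (hx : 0 ≤ x) : Real.sinh x ≤ x * Real.cosh x := by
  have hmono : MonotoneOn (fun t : ℝ => t * Real.cosh t - Real.sinh t) (Set.Ici 0) := by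
    apply monotoneOn_of_deriv_nonneg (convex_Ici 0)
    · exact (continuous_id.mul Real.continuous_cosh).sub Real.continuous_sinh |>.continuousOn
    · intro y hy
      exact ((differentiable_id.mul Real.differentiable_cosh).sub
        Real.differentiable_sinh).differentiableAt.differentiableWithinAt
    · intro y hy
      rw [interior_Ici] at hy
      have hd : HasDerivAt (fun t : ℝ => t * Real.cosh t - Real.sinh t)
          (1 * Real.cosh y + y * Real.sinh y - Real.cosh y) y :=
        ((hasDerivAt_id y).mul (Real.hasDerivAt_cosh y)).sub (Real.hasDerivAt_sinh y)
      rw [hd.deriv]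
      have hyp : (0:ℝ) < y := hy
      have hs : 0 < Real.sinh y := Real.sinh_pos_iff.2 hyp
      nlinarith [mul_nonneg hyp.le hs.le]
  have h := hmono Set.self_mem_Ici (Set.mem_Ici.2 hx) hx
  simp only [Real.sinh_zero, Real.cosh_zero, mul_one, zero_mul, sub_zero, zero_sub,
    neg_nonpos] at h
  linarith

lemma aux_exp_diff (u v : ℝ) :
    |Real.exp u - Real.exp v| ≤ |u - v| / 2 * (Real.exp u + Real.exp v) := by
  wlog h : v ≤ u with H
  · have := H v u (le_of_not_ge h)
    rwa [abs_sub_comm, abs_sub_comm v u, add_comm] at this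
  have hd0 : (0:ℝ) ≤ (u - v) / 2 := by linarith
  have key := aux_sinh_le ((u - v) / 2) hd0
  have e1 : Real.exp ((u+v)/2) * Real.exp ((u-v)/2) = Real.exp u := by
    rw [← Real.exp_add]; congr 1; ring
  have e2 : Real.exp ((u+v)/2) * Real.exp (-((u-v)/2)) = Real.exp v := by
    rw [← Real.exp_add]; congr 1; ring
  have hsinh : Real.exp u - Real.exp v =
      2 * Real.exp ((u+v)/2) * Real.sinh ((u-v)/2) := by
    rw [Real.sinh_eq, ← e1, ← e2]; ring
  have hcosh : Real.exp u + Real.exp v =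
      2 * Real.exp ((u+v)/2) * Real.cosh ((u-v)/2) := by
    rw [Real.cosh_eq, ← e1, ← e2]; ring
  have habs1 : |Real.exp u - Real.exp v| = Real.exp u - Real.exp v :=
    abs_of_nonneg (by simpa using Real.exp_le_exp.2 h)
  have habs2 : |u - v| = u - v := abs_of_nonneg (by linarith)
  rw [habs1, habs2, hsinh, hcosh]
  have hep : (0:ℝ) < Real.exp ((u+v)/2) := Real.exp_pos _
  nlinarith [key, hep]

/-- Each component of the Boltzmann–Gibbs map is Lipschitz with constant 1/κ
with respect to the supremum norm on regret vectors. -/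
theorem boltzmannGibbs_lipschitz {A : Type*} [Fintype A] [Nonempty A]
    (κ : ℝ) (hκ : 0 < κ) (r s : A → ℝ) (a : A) :
    |Real.exp (r a / κ) / ∑ a', Real.exp (r a' / κ) -
      Real.exp (s a / κ) / ∑ a', Real.exp (s a' / κ)| ≤
    (1 / κ) * (Finset.univ.sup' Finset.univ_nonempty fun b => |r b - s b|) := by
  classical
  set M := Finset.univ.sup' Finset.univ_nonempty (fun b => |r b - s b|) with hMdef
  have hMb : ∀ b, |r b - s b| ≤ M := fun b =>
    hMdef ▸ Finset.le_sup' (fun c => |r c - s c|) (Finset.mem_univ b)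
  have hM0 : 0 ≤ M := le_trans (abs_nonneg _) (hMb a)
  set x : A → ℝ := fun b => Real.exp (r b / κ) with hxdef
  set y : A → ℝ := fun b => Real.exp (s b / κ) with hydef
  have hx : ∀ b, 0 < x b := fun b => Real.exp_pos _
  have hy : ∀ b, 0 < y b := fun b => Real.exp_pos _
  set X := ∑ b, x b with hXdef
  set Y := ∑ b, y b with hYdef
  have hX : 0 < X := Finset.sum_pos (fun b _ => hx b) Finset.univ_nonempty
  have hY : 0 < Y := Finset.sum_pos (fun b _ => hy b) Finset.univ_nonempty
  have hxa : x a ≤ X := Finset.single_le_sum (fun b _ => (hx b).le) (Finset.mem_univ a)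
  have hya : y a ≤ Y := Finset.single_le_sum (fun b _ => (hy b).le) (Finset.mem_univ a)
  rw [div_sub_div _ _ hX.ne' hY.ne', abs_div, abs_of_pos (mul_pos hX hY),
    div_le_iff₀ (mul_pos hX hY)]
  have hnum : Real.exp (r a / κ) * Y - X * Real.exp (s a / κ) = x a * Y - y a * X := by
    simp only [hxdef, hydef]; ring
  rw [hnum]
  -- rewrite numerator as a sum over b ≠ a
  have hsum : x a * Y - y a * X = ∑ b ∈ Finset.univ.erase a, (x a * y b - y a * x b) := by
    have h0 : ∑ b, (x a * y b - y a * x b)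
        = ∑ b ∈ Finset.univ.erase a, (x a * y b - y a * x b) := by
      rw [← Finset.sum_erase_add _ _ (Finset.mem_univ a)]
      have : x a * y a - y a * x a = 0 := by ring
      rw [this, add_zero]
    rw [← h0, Finset.sum_sub_distrib, ← Finset.mul_sum, ← Finset.mul_sum]
  -- termwise bound
  have hterm : ∀ b, |x a * y b - y a * x b| ≤ M / κ * (x a * y b + y a * x b) := by
    intro b
    have hxy1 : x a * y b = Real.exp (r a / κ + s b / κ) := by
      rw [Real.exp_add]
    have hxy2 : y a * x b = Real.exp (s a / κ + r b / κ) := by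
      rw [Real.exp_add]
    rw [hxy1, hxy2]
    refine (aux_exp_diff _ _).trans ?_
    have harg : |r a / κ + s b / κ - (s a / κ + r b / κ)| / 2 ≤ M / κ := by
      have h1 := hMb a
      have h2 := hMb b
      have heq : r a / κ + s b / κ - (s a / κ + r b / κ)
          = ((r a - s a) - (r b - s b)) / κ := by
        field_simp
        ring
      rw [heq, abs_div, abs_of_pos hκ, div_div, div_le_div_iff₀ (by positivity) hκ]
      calc |(r a - s a) - (r b - s b)| * κ
          ≤ (|r a - s a| + |r b - s b|) * κ := by
            have := abs_sub (r a - s a) (r b - s b)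
            nlinarith
        _ ≤ (M + M) * κ := by nlinarith
        _ = M * (κ * 2) := by ring
    have hpos : 0 < Real.exp (r a / κ + s b / κ) + Real.exp (s a / κ + r b / κ) := by
      positivity
    exact mul_le_mul_of_nonneg_right harg hpos.le
  calc |x a * Y - y a * X|
      = |∑ b ∈ Finset.univ.erase a, (x a * y b - y a * x b)| := by rw [hsum]
    _ ≤ ∑ b ∈ Finset.univ.erase a, |x a * y b - y a * x b| := Finset.abs_sum_le_sum_abs _ _
    _ ≤ ∑ b ∈ Finset.univ.erase a, M / κ * (x a * y b + y a * x b) :=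
        Finset.sum_le_sum fun b _ => hterm b
    _ = M / κ * (x a * (Y - y a) + y a * (X - x a)) := by
        rw [← Finset.mul_sum, Finset.sum_add_distrib, ← Finset.mul_sum, ← Finset.mul_sum,
          Finset.sum_erase_eq_sub (Finset.mem_univ a),
          Finset.sum_erase_eq_sub (Finset.mem_univ a)]
    _ ≤ 1 / κ * M * (X * Y) := by
        have hkey : x a * (Y - y a) + y a * (X - x a) ≤ X * Y := by
          nlinarith [(hx a).le, (hy a).le, mul_nonneg (sub_nonneg.2 hxa) (sub_nonneg.2 hya)]
        have : M / κ * (x a * (Y - y a) + y a * (X - x a)) ≤ M / κ * (X * Y) :=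
          mul_le_mul_of_nonneg_left hkey (by positivity)
        calc M / κ * (x a * (Y - y a) + y a * (X - x a)) ≤ M / κ * (X * Y) := this
          _ = 1 / κ * M * (X * Y) := by ring
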